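/- Let 0 < α < 1, 0 < β < 1 with α + β = 1, and let −∞ < a < b < +∞. Let f be continuously differentiable on [a,b] and suppose the sequential Caputo derivative 𝒟^α_{a+}𝒟^β_{a+} f exists on (a,b) and extends continuously to [a,b]. If f attains its minimum over [a,b] at a point x* ∈ (a,b), then (𝒟^α_{a+}𝒟^β_{a+} f)(x*) = 0. -/

import Mathlib

open Set

/-- The Caputo fractional derivative of order `γ` with base point `a`:
`(𝒟^γ_{a+} f)(t) = (1/Γ(1−γ)) ∫_a^t (t−s)^{−γ} f′(s) ds`. -/
noncomputable def caputo (γ a : ℝ) (f : ℝ → ℝ) (t : ℝ) : ℝ :=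
  (1 / Real.Gamma (1 - γ)) * ∫ s in a..t, (t - s) ^ (-γ) * deriv f s

/-- The fractional integral appearing in the sequential Caputo derivative:
`t ↦ (1/Γ(1−α)) ∫_a^t (t−s)^{−α} (𝒟^β_{a+} f)(s) ds`. -/
noncomputable def seqCaputoAux (α β a : ℝ) (f : ℝ → ℝ) (t : ℝ) : ℝ :=
  (1 / Real.Gamma (1 - α)) * ∫ s in a..t, (t - s) ^ (-α) * caputo β a f s

/-- The sequential Caputo derivative
`(𝒟^α_{a+}𝒟^β_{a+} f)(t) = (d/dt)[(1/Γ(1−α)) ∫_a^t (t−s)^{−α} (𝒟^β_{a+} f)(s) ds]`. -/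
noncomputable def seqCaputo (α β a : ℝ) (f : ℝ → ℝ) : ℝ → ℝ :=
  deriv (seqCaputoAux α β a f)

/-! Writing `I^p g (t) = Γ(p)⁻¹ ∫_a^t (t - s)^(p-1) g(s) ds` for the Riemann–Liouville integral,
`𝒟^γ f = I^(1-γ) f'`, so the function differentiated in `𝒟^α 𝒟^β f` is `I^(1-α) I^(1-β) f'`.
Fubini on the triangle `a < u < s < t` and the Beta integral give the semigroup law
`I^p I^q = I^(p+q)`, and for `α + β = 1` this is `I^1 f' = f - f a`. Hence `𝒟^α 𝒟^β f = f'`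
on `(a, b)`, and `f'` vanishes at an interior minimum. -/

open MeasureTheory

noncomputable def riemannLiouville (p a : ℝ) (g : ℝ → ℝ) (t : ℝ) : ℝ :=
  1 / Real.Gamma p * ∫ s in a..t, (t - s) ^ (p - 1) * g s

lemma caputo_eq_riemannLiouville (γ a : ℝ) (f : ℝ → ℝ) :
    caputo γ a f = riemannLiouville (1 - γ) a (deriv f) := by
  ext t
  simp only [caputo, riemannLiouville, sub_sub_cancel_left]

lemma seqCaputoAux_eq_riemannLiouville (α β a : ℝ) (f : ℝ → ℝ) :
    seqCaputoAux α β a f = riemannLiouville (1 - α) a (caputo β a f) := by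
  ext t
  simp only [seqCaputoAux, riemannLiouville, sub_sub_cancel_left]

lemma riemannLiouville_one (a : ℝ) (g : ℝ → ℝ) (t : ℝ) :
    riemannLiouville 1 a g t = ∫ s in a..t, g s := by
  simp [riemannLiouville]

lemma intervalIntegrable_sub_rpow {p : ℝ} (hp : 0 < p) (a t : ℝ) :
    IntervalIntegrable (fun s => (t - s) ^ (p - 1)) volume a t := by
  simpa using (intervalIntegral.intervalIntegrable_rpow' (a := t - a) (b := 0) (r := p - 1)
    (by linarith)).comp_sub_left t

lemma integral_sub_rpow {q a s : ℝ} (hq : 0 < q) :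
    ∫ u in a..s, (s - u) ^ (q - 1) = (s - a) ^ q / q := by
  rw [intervalIntegral.integral_comp_sub_left (fun x => x ^ (q - 1)) s, sub_self,
    integral_rpow (Or.inl (by linarith)), sub_add_cancel, Real.zero_rpow hq.ne']
  ring

lemma integral_rpow_mul_sub_rpow {p q c : ℝ} (hp : 0 < p) (hq : 0 < q) (hc : 0 < c) :
    ∫ x in 0..c, x ^ (q - 1) * (c - x) ^ (p - 1)
      = Real.Gamma q * Real.Gamma p / Real.Gamma (q + p) * c ^ (q + p - 1) := by
  have h := Complex.betaIntegral_scaled q p hc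
  rw [Complex.betaIntegral_eq_Gamma_mul_div _ _ (by simpa) (by simpa)] at h
  rw [← Complex.ofReal_add, Complex.Gamma_ofReal, Complex.Gamma_ofReal, Complex.Gamma_ofReal,
    ← Complex.ofReal_one, ← Complex.ofReal_sub, ← Complex.ofReal_sub, ← Complex.ofReal_sub,
    ← Complex.ofReal_cpow hc.le] at h
  apply Complex.ofReal_injective
  rw [← intervalIntegral.integral_ofReal]
  push_cast
  rw [mul_comm, ← h]
  refine intervalIntegral.integral_congr fun x hx => ?_
  rw [uIcc_of_le hc.le] at hx
  rw [Complex.ofReal_cpow hx.1, Complex.ofReal_cpow (sub_nonneg.2 hx.2)]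
  push_cast
  ring

lemma integral_sub_rpow_mul_sub_rpow {p q u t : ℝ} (hp : 0 < p) (hq : 0 < q) (hut : u < t) :
    ∫ s in u..t, (t - s) ^ (p - 1) * (s - u) ^ (q - 1)
      = Real.Gamma p * Real.Gamma q / Real.Gamma (p + q) * (t - u) ^ (p + q - 1) := by
  have h := intervalIntegral.integral_comp_sub_right
    (fun x => x ^ (q - 1) * (t - u - x) ^ (p - 1)) u (a := u) (b := t)
  simp only [sub_self, sub_sub_sub_cancel_right] at h
  rw [integral_rpow_mul_sub_rpow hp hq (sub_pos.2 hut)] at h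
  rw [mul_comm (Real.Gamma p), add_comm p, ← h]
  exact intervalIntegral.integral_congr fun x _ => mul_comm _ _

def triangle (a t : ℝ) : Set (ℝ × ℝ) := {x | a < x.2 ∧ x.2 < x.1 ∧ x.1 < t}

lemma measurableSet_triangle (a t : ℝ) : MeasurableSet (triangle a t) :=
  (measurableSet_lt measurable_const measurable_snd).inter
    ((measurableSet_lt measurable_snd measurable_fst).inter
      (measurableSet_lt measurable_fst measurable_const))

section Triangle

variable {a t : ℝ}

lemma indicator_triangle_mk {M : Type*} [Zero M] (F : ℝ × ℝ → M) (s u : ℝ) :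
    (triangle a t).indicator F (s, u)
      = (Ioo a t).indicator (fun s => (Ioo a s).indicator (fun u => F (s, u)) u) s := by
  simp only [indicator_apply, triangle, mem_Ioo]
  split_ifs <;> grind

lemma indicator_triangle_mk' {M : Type*} [Zero M] (F : ℝ × ℝ → M) (s u : ℝ) :
    (triangle a t).indicator F (s, u)
      = (Ioo a t).indicator (fun u => (Ioo u t).indicator (fun s => F (s, u)) s) u := by
  simp only [indicator_apply, triangle, mem_Ioo]
  split_ifs <;> grind

variable {E : Type*} [NormedAddCommGroup E] [NormedSpace ℝ E]

lemma integral_indicator_triangle_left (F : ℝ × ℝ → E) (s : ℝ) :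
    ∫ u, (triangle a t).indicator F (s, u)
      = (Ioo a t).indicator (fun s => ∫ u in Ioo a s, F (s, u)) s := by
  simp_rw [indicator_triangle_mk]
  by_cases hs : s ∈ Ioo a t
  · simp only [indicator_of_mem hs, integral_indicator measurableSet_Ioo]
  · simp only [indicator_of_notMem hs, integral_zero]

lemma integral_indicator_triangle_right (F : ℝ × ℝ → E) (u : ℝ) :
    ∫ s, (triangle a t).indicator F (s, u)
      = (Ioo a t).indicator (fun u => ∫ s in Ioo u t, F (s, u)) u := by
  simp_rw [indicator_triangle_mk']
  by_cases hu : u ∈ Ioo a t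
  · simp only [indicator_of_mem hu, integral_indicator measurableSet_Ioo]
  · simp only [indicator_of_notMem hu, integral_zero]

theorem integral_integral_swap_triangle {F : ℝ × ℝ → E} (hF : IntegrableOn F (triangle a t)) :
    ∫ s in Ioo a t, ∫ u in Ioo a s, F (s, u) = ∫ u in Ioo a t, ∫ s in Ioo u t, F (s, u) := by
  have hint : Integrable (Function.uncurry fun s u => (triangle a t).indicator F (s, u))
      (volume.prod volume) := by
    rw [← Measure.volume_eq_prod]
    exact (integrable_indicator_iff (measurableSet_triangle a t)).2 hF
  calc ∫ s in Ioo a t, ∫ u in Ioo a s, F (s, u)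
      = ∫ s, ∫ u, (triangle a t).indicator F (s, u) := by
        simp_rw [integral_indicator_triangle_left, integral_indicator measurableSet_Ioo]
    _ = ∫ u, ∫ s, (triangle a t).indicator F (s, u) := integral_integral_swap hint
    _ = ∫ u in Ioo a t, ∫ s in Ioo u t, F (s, u) := by
        simp_rw [integral_indicator_triangle_right, integral_indicator measurableSet_Ioo]

lemma integrableOn_triangle_kernel {p q : ℝ} (hp : 0 < p) (hq : 0 < q) :
    IntegrableOn (fun x : ℝ × ℝ => (t - x.1) ^ (p - 1) * (x.1 - x.2) ^ (q - 1)) (triangle a t) := by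
  set K := fun x : ℝ × ℝ => (t - x.1) ^ (p - 1) * (x.1 - x.2) ^ (q - 1)
  have hK : ContinuousOn K (triangle a t) :=
    ((continuousOn_const.sub continuousOn_fst).rpow_const fun x hx =>
        Or.inl (sub_pos.2 hx.2.2).ne').mul
      ((continuousOn_fst.sub continuousOn_snd).rpow_const fun x hx =>
        Or.inl (sub_pos.2 hx.2.1).ne')
  have hmeas : AEStronglyMeasurable ((triangle a t).indicator K) (volume.prod volume) := by
    rw [← Measure.volume_eq_prod, aestronglyMeasurable_indicator_iff (measurableSet_triangle a t)]
    exact hK.aestronglyMeasurable (measurableSet_triangle a t)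
  have hnorm : (fun s => ∫ u, ‖(triangle a t).indicator K (s, u)‖)
      = (Ioo a t).indicator (fun s => (t - s) ^ (p - 1) * ((s - a) ^ q / q)) := by
    ext s
    simp_rw [norm_indicator_eq_indicator_norm]
    rw [integral_indicator_triangle_left]
    by_cases hs : s ∈ Ioo a t
    · rw [indicator_of_mem hs, indicator_of_mem hs, ← integral_sub_rpow hq,
        intervalIntegral.integral_of_le hs.1.le, integral_Ioc_eq_integral_Ioo,
        ← integral_const_mul]
      refine setIntegral_congr_fun measurableSet_Ioo fun u hu => Real.norm_of_nonneg ?_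
      exact mul_nonneg (Real.rpow_nonneg (sub_nonneg.2 hs.2.le) _)
        (Real.rpow_nonneg (sub_nonneg.2 hu.2.le) _)
    · rw [indicator_of_notMem hs, indicator_of_notMem hs]
  rw [← integrable_indicator_iff (measurableSet_triangle a t), Measure.volume_eq_prod,
    integrable_prod_iff hmeas, hnorm]
  refine ⟨ae_of_all _ fun s => ?_, ?_⟩
  · simp_rw [indicator_triangle_mk]
    by_cases hs : s ∈ Ioo a t
    · simp only [indicator_of_mem hs]
      rw [integrable_indicator_iff measurableSet_Ioo]
      show IntegrableOn (fun u => (t - s) ^ (p - 1) * (s - u) ^ (q - 1)) _ _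
      exact ((intervalIntegrable_sub_rpow hq a s).1.mono_set Ioo_subset_Ioc_self).const_mul _
    · simp only [indicator_of_notMem hs]
      exact integrable_zero _ _ _
  · have hcont : ContinuousOn (fun s => (s - a) ^ q / q) (uIcc a t) :=
      (((continuous_id.sub continuous_const).rpow_const fun _ => Or.inr hq.le).div_const
        q).continuousOn
    rw [integrable_indicator_iff measurableSet_Ioo]
    exact ((intervalIntegrable_sub_rpow hp a t).mul_continuousOn hcont).1.mono_set
      Ioo_subset_Ioc_self

end Triangle

theorem riemannLiouville_riemannLiouville {p q a t : ℝ} {g : ℝ → ℝ} (hp : 0 < p) (hq : 0 < q)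
    (hat : a ≤ t) (hg : ContinuousOn g (Icc a t)) :
    riemannLiouville p a (riemannLiouville q a g) t = riemannLiouville (p + q) a g t := by
  obtain ⟨M, hM⟩ := isCompact_Icc.exists_bound_of_continuousOn hg
  have hgT : ContinuousOn (fun x : ℝ × ℝ => g x.2) (triangle a t) :=
    hg.comp continuousOn_snd fun x hx => ⟨hx.1.le, (hx.2.1.trans hx.2.2).le⟩
  have hint : IntegrableOn (fun x : ℝ × ℝ => (t - x.1) ^ (p - 1) * (x.1 - x.2) ^ (q - 1) * g x.2)
      (triangle a t) :=
    (integrableOn_triangle_kernel hp hq).mul_bdd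
      (hgT.aestronglyMeasurable (measurableSet_triangle a t))
      ((ae_restrict_iff' (measurableSet_triangle a t)).2 <| ae_of_all _ fun x hx =>
        hM x.2 ⟨hx.1.le, (hx.2.1.trans hx.2.2).le⟩)
  have hinner : ∀ s ∈ Ioo a t, (t - s) ^ (p - 1) * riemannLiouville q a g s
      = 1 / Real.Gamma q * ∫ u in Ioo a s, (t - s) ^ (p - 1) * (s - u) ^ (q - 1) * g u := by
    intro s hs
    rw [riemannLiouville, intervalIntegral.integral_of_le hs.1.le, integral_Ioc_eq_integral_Ioo,
      mul_left_comm, ← integral_const_mul]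
    simp only [mul_assoc]
  have houter : ∀ u ∈ Ioo a t, ∫ s in Ioo u t, (t - s) ^ (p - 1) * (s - u) ^ (q - 1) * g u
      = Real.Gamma p * Real.Gamma q / Real.Gamma (p + q) * ((t - u) ^ (p + q - 1) * g u) := by
    intro u hu
    rw [← integral_Ioc_eq_integral_Ioo, ← intervalIntegral.integral_of_le hu.2.le,
      intervalIntegral.integral_mul_const, integral_sub_rpow_mul_sub_rpow hp hq hu.2, mul_assoc]
  have hΓp := (Real.Gamma_pos_of_pos hp).ne'
  have hΓq := (Real.Gamma_pos_of_pos hq).ne'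
  rw [riemannLiouville, riemannLiouville, intervalIntegral.integral_of_le hat,
    intervalIntegral.integral_of_le hat, integral_Ioc_eq_integral_Ioo, integral_Ioc_eq_integral_Ioo,
    setIntegral_congr_fun measurableSet_Ioo hinner, integral_const_mul,
    integral_integral_swap_triangle hint, setIntegral_congr_fun measurableSet_Ioo houter,
    integral_const_mul]
  field_simp

theorem seqCaputo_min_eq_zero_of_eq_one_general
    (α β a b : ℝ) (f : ℝ → ℝ) (xs : ℝ)
    (hα1 : α < 1) (hβ1 : β < 1)
    (hsum : α + β = 1)
    (hf : ∀ x ∈ Set.Icc a b, HasDerivAt f (deriv f x) x)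
    (hf' : ContinuousOn (deriv f) (Set.Icc a b))
    (hxs : xs ∈ Set.Ioo a b)
    (hmin : ∀ x ∈ Set.Icc a b, f xs ≤ f x) :
    seqCaputo α β a f xs = 0 := by
  have hIoo : Ioo a b ∈ nhds xs := Ioo_mem_nhds hxs.1 hxs.2
  have haux : seqCaputoAux α β a f =ᶠ[nhds xs] fun x => f x - f a := by
    filter_upwards [hIoo] with x hx
    have hsub : Icc a x ⊆ Icc a b := Icc_subset_Icc_right hx.2.le
    rw [seqCaputoAux_eq_riemannLiouville, caputo_eq_riemannLiouville,
      riemannLiouville_riemannLiouville (sub_pos.2 hα1) (sub_pos.2 hβ1) hx.1.le (hf'.mono hsub),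
      show 1 - α + (1 - β) = 1 by linarith, riemannLiouville_one]
    exact intervalIntegral.integral_eq_sub_of_hasDerivAt
      (fun y hy => hf y (hsub (uIcc_of_le hx.1.le ▸ hy)))
      ((hf'.mono hsub).intervalIntegrable_of_Icc hx.1.le)
  have hloc : IsLocalMin f xs :=
    Filter.eventually_of_mem hIoo fun x hx => hmin x (Ioo_subset_Icc_self hx)
  rw [seqCaputo, haux.deriv_eq, deriv_sub_const, hloc.deriv_eq_zero]

/-- the sequential Caputo derivative vanishes at an interior
minimum point when `α + β = 1`. -/
theorem seqCaputo_min_eq_zero_of_eq_one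
    (α β a b : ℝ) (f : ℝ → ℝ) (xs : ℝ)
    (hα0 : 0 < α) (hα1 : α < 1) (hβ0 : 0 < β) (hβ1 : β < 1)
    (hsum : α + β = 1) (hab : a < b)
    (hf : ∀ x ∈ Set.Icc a b, HasDerivAt f (deriv f x) x)
    (hf' : ContinuousOn (deriv f) (Set.Icc a b))
    (hex : ∀ x ∈ Set.Ioo a b,
      HasDerivAt (seqCaputoAux α β a f) (seqCaputo α β a f x) x)
    (hcont : ∃ g : ℝ → ℝ, ContinuousOn g (Set.Icc a b) ∧
      ∀ x ∈ Set.Ioo a b, g x = seqCaputo α β a f x)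
    (hxs : xs ∈ Set.Ioo a b)
    (hmin : ∀ x ∈ Set.Icc a b, f xs ≤ f x) :
    seqCaputo α β a f xs = 0 :=
  seqCaputo_min_eq_zero_of_eq_one_general α β a b f xs hα1 hβ1 hsum hf hf' hxs hmin
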